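/- arXiv:1802.09675 — 4 statements merged into one kernel-verified Lean document; each statement's English description precedes it below -/
import Mathlib

section
/- Let U ⊆ ℝ^{2n} be open, identified with an open subset of ℂ^n via complex coordinates z^m. Let J be a smooth (1,1)-tensor field on U whose only nonzero components are the mixed ones J_m{}^{n̄} and J_{m̄}{}^n, satisfying the Nijenhuis integrability condition ∂_{[M} J_{N]}{}^P = J_M{}^Q J_N{}^S ∂_{[Q} J_{S]}{}^P and the relations J_s{}^{m̄} J_{m̄}{}^k = −δ_s^k and J_{m̄}{}^s J_s{}^{k̄} = −δ_{m̄}^{k̄} (i.e. J² = −1) on U. Then ∂_n J_s{}^{m̄} − ∂_s J_n{}^{m̄} = 0 for all holomorphic indices n, s and all antiholomorphic indices m̄; i.e. the exterior holomorphic derivative of the (2,0)-form with components J_s{}^{m̄} vanishes. -/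
open Complex

noncomputable section

/-- A point of `ℂ^n` (identified with `ℝ^{2n}`). -/
abbrev Pt (n : ℕ) := Fin n → ℂ

/-- A tensor index: `Sum.inl m` is the holomorphic index `m`, `Sum.inr m` the
antiholomorphic index `m̄`. -/
abbrev Idx (n : ℕ) := Fin n ⊕ Fin n

/-- The Wirtinger derivative `∂_M` in the direction of the index `M`:
`∂_m = ½(∂/∂x^m - i ∂/∂y^m)` and `∂_{m̄} = ½(∂/∂x^m + i ∂/∂y^m)`, expressed through the
real Fréchet derivative. -/
noncomputable def wder {n : ℕ} (M : Idx n) (f : Pt n → ℂ) (z : Pt n) : ℂ :=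
  match M with
  | Sum.inl m =>
      (1 / 2 : ℂ) *
        (fderiv ℝ f z (Pi.single m 1) - Complex.I * fderiv ℝ f z (Pi.single m Complex.I))
  | Sum.inr m =>
      (1 / 2 : ℂ) *
        (fderiv ℝ f z (Pi.single m 1) + Complex.I * fderiv ℝ f z (Pi.single m Complex.I))

/-- If `f` vanishes on an open set `U`, its Wirtinger derivatives vanish on `U`. -/
lemma wder_zero_of_eqOn_zero {n : ℕ} {U : Set (Pt n)} (hU : IsOpen U)
    {f : Pt n → ℂ} (hf : ∀ y ∈ U, f y = 0) {x : Pt n} (hx : x ∈ U) (M : Idx n) :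
    wder M f x = 0 := by
  have hev : f =ᶠ[nhds x] (fun _ => (0 : ℂ)) :=
    Filter.eventuallyEq_of_mem (hU.mem_nhds hx) hf
  have hfd : fderiv ℝ f x = 0 := by
    rw [hev.fderiv_eq, fderiv_fun_const]; rfl
  cases M <;> simp [wder, hfd]

/-- for a smooth (1,1)-tensor `J` on an open `U ⊆ ℂ^n` with only mixed
components, satisfying the Nijenhuis integrability condition and `J² = -1`, one has
`∂_n J_s{}^{m̄} - ∂_s J_n{}^{m̄} = 0` on `U` (the exterior holomorphic derivative of the
(2,0)-form with components `J_s{}^{m̄}` vanishes). -/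
theorem stmt3 (n : ℕ) (U : Set (Pt n)) (hU : IsOpen U)
    (J : Idx n → Idx n → Pt n → ℂ)
    (hsmooth : ∀ M N, ContDiffOn ℝ (⊤ : ℕ∞) (J M N) U)
    (hmixed : ∀ (m k : Fin n), ∀ x ∈ U,
      J (Sum.inl m) (Sum.inl k) x = 0 ∧ J (Sum.inr m) (Sum.inr k) x = 0)
    (hNij : ∀ (M N P : Idx n), ∀ x ∈ U,
      wder M (J N P) x - wder N (J M P) x =
        ∑ Q : Idx n, ∑ S : Idx n,
          J M Q x * J N S x * (wder Q (J S P) x - wder S (J Q P) x))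
    (hJsq : ∀ (s k : Fin n), ∀ x ∈ U,
      (∑ m : Fin n, J (Sum.inl s) (Sum.inr m) x * J (Sum.inr m) (Sum.inl k) x) =
        -(if s = k then 1 else 0))
    (hJsq' : ∀ (s k : Fin n), ∀ x ∈ U,
      (∑ m : Fin n, J (Sum.inr s) (Sum.inl m) x * J (Sum.inl m) (Sum.inr k) x) =
        -(if s = k then 1 else 0)) :
    ∀ (nn s m : Fin n), ∀ x ∈ U,
      wder (Sum.inl nn) (J (Sum.inl s) (Sum.inr m)) x -
        wder (Sum.inl s) (J (Sum.inl nn) (Sum.inr m)) x = 0 := by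
  intro nn s m x hx
  have h := hNij (Sum.inl nn) (Sum.inl s) (Sum.inr m) x hx
  rw [h]
  apply Finset.sum_eq_zero
  intro Q _
  apply Finset.sum_eq_zero
  intro S _
  cases Q with
  | inl q => rw [(hmixed nn q x hx).1]; ring
  | inr q =>
    cases S with
    | inl t => rw [(hmixed s t x hx).1]; ring
    | inr t =>
      have h1 : wder (Sum.inr q) (J (Sum.inr t) (Sum.inr m)) x = 0 :=
        wder_zero_of_eqOn_zero hU (fun y hy => (hmixed t m y hy).2) hx _
      have h2 : wder (Sum.inr t) (J (Sum.inr q) (Sum.inr m)) x = 0 :=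
        wder_zero_of_eqOn_zero hU (fun y hy => (hmixed q m y hy).2) hx _
      rw [h1, h2]; ring
end
end

section
/- Let U ⊆ ℝ^{2n} be open, identified with an open subset of ℂ^n via complex coordinates z^m. Let I be the canonical constant complex structure (I_m{}^n = −i δ_m^n, I_{m̄}{}^{n̄} = +i δ_{m̄}^{n̄}, mixed components zero), and let J, K be smooth (1,1)-tensor fields on U such that at every point I, J, K satisfy the quaternion relations IJ = −JI = K, JK = −KJ = I, KI = −IK = J (hence J and K have only mixed components). Define connection coefficients by Γ^k_{mn} = J_n{}^{l̄} ∂_m J_{l̄}{}^k and Γ^{k̄}_{m̄n̄} = J_{n̄}{}^{l} ∂_{m̄} J_{l}{}^{k̄}, with all other components zero. Then the covariant derivatives of I, J and K with respect to Γ vanish identically on U: for each T ∈ {I, J, K} and all indices P, N, M, one has ∂_P T_N{}^M − Γ^Q_{PN} T_Q{}^M + Γ^M_{PQ} T_N{}^Q = 0. -/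
open Complex

noncomputable section

/-- The canonical constant complex structure `I`:
`I_m{}^k = -i δ_m^k`, `I_{m̄}{}^{k̄} = +i δ_{m̄}^{k̄}`, mixed components zero. -/
def Ican (n : ℕ) : Idx n → Idx n → ℂ := fun M N =>
  match M, N with
  | Sum.inl m, Sum.inl k => if m = k then -Complex.I else 0
  | Sum.inr m, Sum.inr k => if m = k then Complex.I else 0
  | _, _ => 0

/-- `I` as a (constant) tensor field. -/
def IcanT (n : ℕ) : Idx n → Idx n → Pt n → ℂ := fun M N _ => Ican n M N

/-- Pointwise product of two (1,1)-tensor fields: `(A·B)_M{}^P = A_M{}^Q B_Q{}^P`. -/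
noncomputable def tmul {n : ℕ} (A B : Idx n → Idx n → Pt n → ℂ) (M P : Idx n) (x : Pt n) : ℂ :=
  ∑ Q : Idx n, A M Q x * B Q P x

/-- Covariant derivative `∇_P T_N{}^M = ∂_P T_N{}^M - Γ^Q_{PN} T_Q{}^M + Γ^M_{PQ} T_N{}^Q`
of a (1,1)-tensor with respect to connection coefficients `Γ` (`Γ Q P N` is `Γ^Q_{PN}`). -/
noncomputable def covd {n : ℕ} (Γ : Idx n → Idx n → Idx n → Pt n → ℂ)
    (T : Idx n → Idx n → Pt n → ℂ) (P N M : Idx n) (x : Pt n) : ℂ :=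
  wder P (T N M) x - (∑ Q : Idx n, Γ Q P N x * T Q M x) + ∑ Q : Idx n, Γ M P Q x * T N Q x

/-- The Obata connection coefficients: `Γ^k_{mn} = J_n{}^{l̄} ∂_m J_{l̄}{}^k`,
`Γ^{k̄}_{m̄n̄} = J_{n̄}{}^{l} ∂_{m̄} J_{l}{}^{k̄}`, all other components zero. -/
noncomputable def obataC {n : ℕ} (J : Idx n → Idx n → Pt n → ℂ) :
    Idx n → Idx n → Idx n → Pt n → ℂ := fun P M N x =>
  match P, M, N with
  | Sum.inl k, Sum.inl m, Sum.inl nn =>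
      ∑ l : Fin n, J (Sum.inl nn) (Sum.inr l) x * wder (Sum.inl m) (J (Sum.inr l) (Sum.inl k)) x
  | Sum.inr k, Sum.inr m, Sum.inr nn =>
      ∑ l : Fin n, J (Sum.inr nn) (Sum.inl l) x * wder (Sum.inr m) (J (Sum.inl l) (Sum.inr k)) x
  | _, _, _ => 0

section Helpers
variable {n : ℕ}

lemma wder_congr (M : Idx n) {f g : Pt n → ℂ} {x : Pt n}
    (h : f =ᶠ[nhds x] g) : wder M f x = wder M g x := by
  cases M <;> simp [wder, h.fderiv_eq]

lemma wder_const (M : Idx n) (c : ℂ) (x : Pt n) : wder M (fun _ => c) x = 0 := by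
  cases M <;> simp [wder]

lemma wder_eventually_const (M : Idx n) {f : Pt n → ℂ} {x : Pt n} {c : ℂ}
    (h : f =ᶠ[nhds x] fun _ => c) : wder M f x = 0 :=
  (wder_congr M h).trans (wder_const M c x)

lemma wder_sum (M : Idx n) {ι : Type*} [Fintype ι] (f : ι → Pt n → ℂ) (x : Pt n)
    (hf : ∀ i, DifferentiableAt ℝ (f i) x) :
    wder M (fun y => ∑ i, f i y) x = ∑ i, wder M (f i) x := by
  have h := fderiv_fun_sum (u := Finset.univ) (A := f) (fun i _ => hf i)
  cases M with
  | inl m =>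
    simp only [wder, h, ContinuousLinearMap.coe_sum', Finset.sum_apply, Finset.mul_sum]
    rw [← Finset.sum_sub_distrib, Finset.mul_sum]
  | inr m =>
    simp only [wder, h, ContinuousLinearMap.coe_sum', Finset.sum_apply, Finset.mul_sum]
    rw [← Finset.sum_add_distrib, Finset.mul_sum]

lemma wder_mul (M : Idx n) {f g : Pt n → ℂ} {x : Pt n}
    (hf : DifferentiableAt ℝ f x) (hg : DifferentiableAt ℝ g x) :
    wder M (fun y => f y * g y) x = f x * wder M g x + g x * wder M f x := by
  have h := fderiv_fun_mul hf hg
  cases M <;>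
    · simp only [wder, h, ContinuousLinearMap.add_apply, ContinuousLinearMap.coe_smul',
        Pi.smul_apply, smul_eq_mul]
      ring

lemma wder_const_mul (M : Idx n) {f : Pt n → ℂ} {x : Pt n} (c : ℂ)
    (hf : DifferentiableAt ℝ f x) :
    wder M (fun y => c * f y) x = c * wder M f x := by
  have h := fderiv_const_mul hf c
  cases M <;>
    · simp only [wder, h, ContinuousLinearMap.coe_smul', Pi.smul_apply, smul_eq_mul]
      ring

lemma alg_key (nn : Fin n) (a c W' : Fin n → ℂ) (W A : Fin n → Fin n → ℂ)
    (h1 : ∀ l, ∑ q, W l q * c q = - ∑ q, A l q * W' q)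
    (h2 : ∀ q, ∑ l, a l * A l q = -(if nn = q then 1 else 0)) :
    ∑ q, (∑ l, a l * W l q) * c q = W' nn := by
  calc ∑ q, (∑ l, a l * W l q) * c q
      = ∑ l, a l * ∑ q, W l q * c q := by
        simp only [Finset.sum_mul, Finset.mul_sum, mul_assoc]
        exact Finset.sum_comm
    _ = ∑ l, a l * -∑ q, A l q * W' q := Finset.sum_congr rfl fun l _ => by rw [h1 l]
    _ = -∑ l, ∑ q, a l * (A l q * W' q) := by
        simp only [mul_neg, Finset.mul_sum, Finset.sum_neg_distrib]
    _ = -∑ q, (∑ l, a l * A l q) * W' q := by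
        rw [Finset.sum_comm]
        simp only [Finset.sum_mul, mul_assoc]
    _ = -∑ q, (-(if nn = q then 1 else 0)) * W' q := by
        rw [Finset.sum_congr rfl fun q _ => by rw [h2 q]]
    _ = W' nn := by simp [Finset.sum_ite_eq]

lemma alg_key2 (nn : Fin n) (a W' : Fin n → ℂ) (A : Fin n → Fin n → ℂ)
    (h2 : ∀ l, ∑ q, a q * A q l = -(if nn = l then 1 else 0)) :
    ∑ q, (∑ l, A q l * W' l) * a q = - W' nn := by
  calc ∑ q, (∑ l, A q l * W' l) * a q
      = ∑ l, (∑ q, a q * A q l) * W' l := by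
        simp only [Finset.sum_mul, Finset.mul_sum]
        rw [Finset.sum_comm]
        exact Finset.sum_congr rfl fun q _ => Finset.sum_congr rfl fun l _ => by ring
    _ = ∑ l, (-(if nn = l then 1 else 0)) * W' l := by
        rw [Finset.sum_congr rfl fun l _ => by rw [h2 l]]
    _ = - W' nn := by simp [Finset.sum_ite_eq]

end Helpers
section ObataUnfold
variable {n : ℕ} (J : Idx n → Idx n → Pt n → ℂ) (x : Pt n)

lemma obataC_lll (k m nn : Fin n) : obataC J (Sum.inl k) (Sum.inl m) (Sum.inl nn) x
    = ∑ l : Fin n, J (Sum.inl nn) (Sum.inr l) x * wder (Sum.inl m) (J (Sum.inr l) (Sum.inl k)) x := rfl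
lemma obataC_rrr (k m nn : Fin n) : obataC J (Sum.inr k) (Sum.inr m) (Sum.inr nn) x
    = ∑ l : Fin n, J (Sum.inr nn) (Sum.inl l) x * wder (Sum.inr m) (J (Sum.inl l) (Sum.inr k)) x := rfl
lemma obataC_llr (k m nn : Fin n) : obataC J (Sum.inl k) (Sum.inl m) (Sum.inr nn) x = 0 := rfl
lemma obataC_lrl (k m nn : Fin n) : obataC J (Sum.inl k) (Sum.inr m) (Sum.inl nn) x = 0 := rfl
lemma obataC_lrr (k m nn : Fin n) : obataC J (Sum.inl k) (Sum.inr m) (Sum.inr nn) x = 0 := rfl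
lemma obataC_rll (k m nn : Fin n) : obataC J (Sum.inr k) (Sum.inl m) (Sum.inl nn) x = 0 := rfl
lemma obataC_rlr (k m nn : Fin n) : obataC J (Sum.inr k) (Sum.inl m) (Sum.inr nn) x = 0 := rfl
lemma obataC_rrl (k m nn : Fin n) : obataC J (Sum.inr k) (Sum.inr m) (Sum.inl nn) x = 0 := rfl

end ObataUnfold
/-- Lemma 3: if `I` is the canonical constant complex structure and `J`, `K`
are smooth tensor fields satisfying, at every point of `U`, the quaternion relations
`IJ = -JI = K`, `JK = -KJ = I`, `KI = -IK = J`, then the covariant derivatives of `I`,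
`J`, `K` with respect to the Obata connection `Γ^k_{mn} = J_n{}^{l̄} ∂_m J_{l̄}{}^k`,
`Γ^{k̄}_{m̄n̄} = J_{n̄}{}^l ∂_{m̄} J_l{}^{k̄}` vanish identically on `U`. -/
theorem stmt4 (n : ℕ) (U : Set (Pt n)) (hU : IsOpen U)
    (J K : Idx n → Idx n → Pt n → ℂ)
    (hJsm : ∀ M N, ContDiffOn ℝ (⊤ : ℕ∞) (J M N) U)
    (hKsm : ∀ M N, ContDiffOn ℝ (⊤ : ℕ∞) (K M N) U)
    (hquat : ∀ (M P : Idx n), ∀ x ∈ U,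
      tmul (IcanT n) J M P x = K M P x ∧
      tmul J (IcanT n) M P x = -K M P x ∧
      tmul J K M P x = IcanT n M P x ∧
      tmul K J M P x = -IcanT n M P x ∧
      tmul K (IcanT n) M P x = J M P x ∧
      tmul (IcanT n) K M P x = -J M P x) :
    ∀ T ∈ ({IcanT n, J, K} : Set (Idx n → Idx n → Pt n → ℂ)),
      ∀ (P N M : Idx n), ∀ x ∈ U, covd (obataC J) T P N M x = 0 := by
  -- K in terms of J
  have hKJh : ∀ (m : Fin n) (P : Idx n), ∀ y ∈ U,
      K (Sum.inl m) P y = -Complex.I * J (Sum.inl m) P y := by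
    intro m P y hy
    rw [← (hquat (Sum.inl m) P y hy).1]
    simp [tmul, IcanT, Ican, Fintype.sum_sum_type, ite_mul, Finset.sum_ite_eq]
  have hKJa : ∀ (m : Fin n) (P : Idx n), ∀ y ∈ U,
      K (Sum.inr m) P y = Complex.I * J (Sum.inr m) P y := by
    intro m P y hy
    rw [← (hquat (Sum.inr m) P y hy).1]
    simp [tmul, IcanT, Ican, Fintype.sum_sum_type, ite_mul, Finset.sum_ite_eq]
  -- J has only mixed components
  have hJhh : ∀ (m k : Fin n), ∀ y ∈ U, J (Sum.inl m) (Sum.inl k) y = 0 := by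
    intro m k y hy
    have e : tmul J (IcanT n) (Sum.inl m) (Sum.inl k) y
        = J (Sum.inl m) (Sum.inl k) y * (-Complex.I) := by
      simp [tmul, IcanT, Ican, Fintype.sum_sum_type, mul_ite, Finset.sum_ite_eq']
    have h := (hquat (Sum.inl m) (Sum.inl k) y hy).2.1
    rw [e, hKJh m (Sum.inl k) y hy] at h
    have h3 : (2 * Complex.I) * J (Sum.inl m) (Sum.inl k) y = 0 := by linear_combination -h
    exact (mul_eq_zero.mp h3).resolve_left (mul_ne_zero two_ne_zero Complex.I_ne_zero)
  have hJaa : ∀ (m k : Fin n), ∀ y ∈ U, J (Sum.inr m) (Sum.inr k) y = 0 := by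
    intro m k y hy
    have e : tmul J (IcanT n) (Sum.inr m) (Sum.inr k) y
        = J (Sum.inr m) (Sum.inr k) y * Complex.I := by
      simp [tmul, IcanT, Ican, Fintype.sum_sum_type, mul_ite, Finset.sum_ite_eq']
    have h := (hquat (Sum.inr m) (Sum.inr k) y hy).2.1
    rw [e, hKJa m (Sum.inr k) y hy] at h
    have h3 : (2 * Complex.I) * J (Sum.inr m) (Sum.inr k) y = 0 := by linear_combination h
    exact (mul_eq_zero.mp h3).resolve_left (mul_ne_zero two_ne_zero Complex.I_ne_zero)
  -- the square identities
  have hS1 : ∀ (m k : Fin n), ∀ y ∈ U,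
      (∑ l : Fin n, J (Sum.inl m) (Sum.inr l) y * J (Sum.inr l) (Sum.inl k) y)
        = -(if m = k then 1 else 0) := by
    intro m k y hy
    have e1 : ∑ q : Fin n, J (Sum.inl m) (Sum.inl q) y * K (Sum.inl q) (Sum.inl k) y = 0 :=
      Finset.sum_eq_zero fun q _ => by rw [hJhh m q y hy, zero_mul]
    have e2 : ∀ l : Fin n, J (Sum.inl m) (Sum.inr l) y * K (Sum.inr l) (Sum.inl k) y
        = Complex.I * (J (Sum.inl m) (Sum.inr l) y * J (Sum.inr l) (Sum.inl k) y) := fun l => by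
      rw [hKJa l (Sum.inl k) y hy]; ring
    have h := (hquat (Sum.inl m) (Sum.inl k) y hy).2.2.1
    rw [tmul, Fintype.sum_sum_type, e1, zero_add,
      Finset.sum_congr rfl fun l _ => e2 l, ← Finset.mul_sum] at h
    have h2 : Complex.I * (∑ l : Fin n, J (Sum.inl m) (Sum.inr l) y * J (Sum.inr l) (Sum.inl k) y)
        = Complex.I * -(if m = k then 1 else 0) := by
      rw [h]; simp [IcanT, Ican]; split_ifs <;> simp
    exact mul_left_cancel₀ Complex.I_ne_zero h2
  have hS2 : ∀ (m k : Fin n), ∀ y ∈ U,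
      (∑ l : Fin n, J (Sum.inr m) (Sum.inl l) y * J (Sum.inl l) (Sum.inr k) y)
        = -(if m = k then 1 else 0) := by
    intro m k y hy
    have e1 : ∑ q : Fin n, J (Sum.inr m) (Sum.inr q) y * K (Sum.inr q) (Sum.inr k) y = 0 :=
      Finset.sum_eq_zero fun q _ => by rw [hJaa m q y hy, zero_mul]
    have e2 : ∀ l : Fin n, J (Sum.inr m) (Sum.inl l) y * K (Sum.inl l) (Sum.inr k) y
        = -Complex.I * (J (Sum.inr m) (Sum.inl l) y * J (Sum.inl l) (Sum.inr k) y) := fun l => by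
      rw [hKJh l (Sum.inr k) y hy]; ring
    have h := (hquat (Sum.inr m) (Sum.inr k) y hy).2.2.1
    rw [tmul, Fintype.sum_sum_type, e1, add_zero,
      Finset.sum_congr rfl fun l _ => e2 l, ← Finset.mul_sum] at h
    have h2 : (-Complex.I) * (∑ l : Fin n, J (Sum.inr m) (Sum.inl l) y * J (Sum.inl l) (Sum.inr k) y)
        = (-Complex.I) * -(if m = k then 1 else 0) := by
      rw [h]; simp [IcanT, Ican]; split_ifs <;> simp
    exact mul_left_cancel₀ (neg_ne_zero.mpr Complex.I_ne_zero) h2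
  intro T hT P N M x hx
  have hUx : U ∈ nhds x := hU.mem_nhds hx
  have hJd : ∀ (A B : Idx n), DifferentiableAt ℝ (J A B) x := fun A B =>
    ((hJsm A B).contDiffAt hUx).differentiableAt (by simp)
  have hD1 : ∀ (P : Idx n) (l k : Fin n),
      ∑ q : Fin n, wder P (J (Sum.inr l) (Sum.inl q)) x * J (Sum.inl q) (Sum.inr k) x
        = -∑ q : Fin n, J (Sum.inr l) (Sum.inl q) x * wder P (J (Sum.inl q) (Sum.inr k)) x := by
    intro P l k
    have h0 : wder P (fun y => ∑ q : Fin n,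
        J (Sum.inr l) (Sum.inl q) y * J (Sum.inl q) (Sum.inr k) y) x = 0 :=
      wder_eventually_const P (Filter.eventuallyEq_of_mem hUx fun y hy => hS2 l k y hy)
    rw [wder_sum P _ x (fun q => (hJd _ _).fun_mul (hJd _ _)),
      Finset.sum_congr rfl (fun q _ => wder_mul P (hJd _ _) (hJd _ _)),
      Finset.sum_add_distrib] at h0
    rw [Finset.sum_congr rfl fun q (_ : q ∈ Finset.univ) =>
      mul_comm (wder P (J (Sum.inr l) (Sum.inl q)) x) (J (Sum.inl q) (Sum.inr k) x)]
    linear_combination h0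
  have hD2 : ∀ (P : Idx n) (l k : Fin n),
      ∑ q : Fin n, wder P (J (Sum.inl l) (Sum.inr q)) x * J (Sum.inr q) (Sum.inl k) x
        = -∑ q : Fin n, J (Sum.inl l) (Sum.inr q) x * wder P (J (Sum.inr q) (Sum.inl k)) x := by
    intro P l k
    have h0 : wder P (fun y => ∑ q : Fin n,
        J (Sum.inl l) (Sum.inr q) y * J (Sum.inr q) (Sum.inl k) y) x = 0 :=
      wder_eventually_const P (Filter.eventuallyEq_of_mem hUx fun y hy => hS1 l k y hy)
    rw [wder_sum P _ x (fun q => (hJd _ _).fun_mul (hJd _ _)),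
      Finset.sum_congr rfl (fun q _ => wder_mul P (hJd _ _) (hJd _ _)),
      Finset.sum_add_distrib] at h0
    rw [Finset.sum_congr rfl fun q (_ : q ∈ Finset.univ) =>
      mul_comm (wder P (J (Sum.inl l) (Sum.inr q)) x) (J (Sum.inr q) (Sum.inl k) x)]
    linear_combination h0
  -- covariant derivative of J vanishes at x
  -- eventually-zero facts
  have wJhh : ∀ (P : Idx n) (a b : Fin n), wder P (J (Sum.inl a) (Sum.inl b)) x = 0 := fun P a b =>
    wder_eventually_const P (Filter.eventuallyEq_of_mem hUx fun y hy => hJhh a b y hy)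
  have wJaa : ∀ (P : Idx n) (a b : Fin n), wder P (J (Sum.inr a) (Sum.inr b)) x = 0 := fun P a b =>
    wder_eventually_const P (Filter.eventuallyEq_of_mem hUx fun y hy => hJaa a b y hy)
  -- covariant derivative of J vanishes at x
  have hcovJ : ∀ (P N M : Idx n), covd (obataC J) J P N M x = 0 := by
    intro P N M
    rw [covd, Fintype.sum_sum_type, Fintype.sum_sum_type]
    rcases P with p | p <;> rcases N with nn | nn <;> rcases M with k | k <;>
      simp only [obataC_lll, obataC_rrr, obataC_llr, obataC_lrl, obataC_lrr, obataC_rll,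
        obataC_rlr, obataC_rrl, zero_mul, Finset.sum_const_zero, add_zero, zero_add, sub_zero]
    · -- P, N, M all holomorphic
      rw [wJhh, Finset.sum_eq_zero fun q _ => by rw [hJhh q k x hx, mul_zero],
        Finset.sum_eq_zero fun q _ => by rw [hJhh nn q x hx, mul_zero]]
      ring
    · -- P, N holomorphic, M antiholomorphic
      have key := alg_key nn (fun l => J (Sum.inl nn) (Sum.inr l) x)
        (fun q => J (Sum.inl q) (Sum.inr k) x)
        (fun q => wder (Sum.inl p) (J (Sum.inl q) (Sum.inr k)) x)
        (fun l q => wder (Sum.inl p) (J (Sum.inr l) (Sum.inl q)) x)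
        (fun l q => J (Sum.inr l) (Sum.inl q) x)
        (fun l => hD1 (Sum.inl p) l k) (fun q => hS1 nn q x hx)
      rw [key]; ring
    · -- P holomorphic, N antiholomorphic, M holomorphic
      have key := alg_key2 nn (fun q => J (Sum.inr nn) (Sum.inl q) x)
        (fun l => wder (Sum.inl p) (J (Sum.inr l) (Sum.inl k)) x)
        (fun q l => J (Sum.inl q) (Sum.inr l) x)
        (fun l => hS2 nn l x hx)
      rw [key]; ring
    · -- P holomorphic, N, M antiholomorphic
      rw [wJaa]
    · -- P antiholomorphic, N, M holomorphic
      rw [wJhh]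
    · -- P antiholomorphic, N holomorphic, M antiholomorphic
      have key := alg_key2 nn (fun q => J (Sum.inl nn) (Sum.inr q) x)
        (fun l => wder (Sum.inr p) (J (Sum.inl l) (Sum.inr k)) x)
        (fun q l => J (Sum.inr q) (Sum.inl l) x)
        (fun l => hS1 nn l x hx)
      rw [key]; ring
    · -- P, N antiholomorphic, M holomorphic
      have key := alg_key nn (fun l => J (Sum.inr nn) (Sum.inl l) x)
        (fun q => J (Sum.inr q) (Sum.inl k) x)
        (fun q => wder (Sum.inr p) (J (Sum.inr q) (Sum.inl k)) x)
        (fun l q => wder (Sum.inr p) (J (Sum.inl l) (Sum.inr q)) x)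
        (fun l q => J (Sum.inl l) (Sum.inr q) x)
        (fun l => hD2 (Sum.inr p) l k) (fun q => hS2 nn q x hx)
      rw [key]; ring
    · -- P, N, M all antiholomorphic
      rw [wJaa, Finset.sum_eq_zero fun q _ => by rw [hJaa q k x hx, mul_zero],
        Finset.sum_eq_zero fun q _ => by rw [hJaa nn q x hx, mul_zero]]
      ring
  -- covariant derivative of the canonical structure vanishes
  have hcovI : ∀ (P N M : Idx n), covd (obataC J) (IcanT n) P N M x = 0 := by
    intro P N M
    have w0 : wder P (IcanT n N M) x = 0 := wder_const P (Ican n N M) x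
    rw [covd, w0, Fintype.sum_sum_type, Fintype.sum_sum_type]
    rcases P with p | p <;> rcases N with nn | nn <;> rcases M with k | k <;>
      simp only [IcanT, Ican, obataC_llr, obataC_lrl, obataC_lrr, obataC_rll,
        obataC_rlr, obataC_rrl, zero_mul, mul_zero, Finset.sum_const_zero, add_zero, zero_add,
        mul_ite, Finset.sum_ite_eq, Finset.sum_ite_eq', Finset.mem_univ, if_true] <;>
      ring
  -- covariant derivative of K vanishes
  have hcovK : ∀ (P N M : Idx n), covd (obataC J) K P N M x = 0 := by
    intro P N M
    have hJc := hcovJ P N M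
    rw [covd] at hJc ⊢
    rcases N with nn | nn
    · have t1 : wder P (K (Sum.inl nn) M) x = -Complex.I * wder P (J (Sum.inl nn) M) x := by
        rw [wder_congr P (Filter.eventuallyEq_of_mem hUx fun y hy => hKJh nn M y hy),
          wder_const_mul P _ (hJd _ _)]
      have t2 : ∑ Q : Idx n, obataC J Q P (Sum.inl nn) x * K Q M x
          = -Complex.I * ∑ Q : Idx n, obataC J Q P (Sum.inl nn) x * J Q M x := by
        rw [Finset.mul_sum]
        refine Finset.sum_congr rfl fun Q _ => ?_
        rcases Q with q | q
        · rw [hKJh q M x hx]; ring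
        · rcases P with p | p
          · rw [obataC_rll]; ring
          · rw [obataC_rrl]; ring
      have t3 : ∑ Q : Idx n, obataC J M P Q x * K (Sum.inl nn) Q x
          = -Complex.I * ∑ Q : Idx n, obataC J M P Q x * J (Sum.inl nn) Q x := by
        rw [Finset.mul_sum]
        exact Finset.sum_congr rfl fun Q _ => by rw [hKJh nn Q x hx]; ring
      rw [t1, t2, t3]
      linear_combination (-Complex.I) * hJc
    · have t1 : wder P (K (Sum.inr nn) M) x = Complex.I * wder P (J (Sum.inr nn) M) x := by
        rw [wder_congr P (Filter.eventuallyEq_of_mem hUx fun y hy => hKJa nn M y hy),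
          wder_const_mul P _ (hJd _ _)]
      have t2 : ∑ Q : Idx n, obataC J Q P (Sum.inr nn) x * K Q M x
          = Complex.I * ∑ Q : Idx n, obataC J Q P (Sum.inr nn) x * J Q M x := by
        rw [Finset.mul_sum]
        refine Finset.sum_congr rfl fun Q _ => ?_
        rcases Q with q | q
        · rcases P with p | p
          · rw [obataC_llr]; ring
          · rw [obataC_lrr]; ring
        · rw [hKJa q M x hx]; ring
      have t3 : ∑ Q : Idx n, obataC J M P Q x * K (Sum.inr nn) Q x
          = Complex.I * ∑ Q : Idx n, obataC J M P Q x * J (Sum.inr nn) Q x := by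
        rw [Finset.mul_sum]
        exact Finset.sum_congr rfl fun Q _ => by rw [hKJa nn Q x hx]; ring
      rw [t1, t2, t3]
      linear_combination Complex.I * hJc
  simp only [Set.mem_insert_iff, Set.mem_singleton_iff] at hT
  rcases hT with rfl | rfl | rfl
  · exact hcovI P N M
  · exact hcovJ P N M
  · exact hcovK P N M
end
end

section
/- Let n ≥ 1 and let the index set consist of the n holomorphic values m and the n antiholomorphic values m̄. Let I, J, K ∈ M_{2n}(ℂ), written in block form for the splitting ℂ^{2n} = ℂ^n ⊕ ℂ^n, with I = diag(−i·1_n, +i·1_n), satisfying the quaternion relations IJ = −JI = K, JK = −KJ = I, KI = −IK = J (so that by the quaternion algebra J, K are block off-diagonal and the nonzero blocks of J ± iK multiply to −4 times identity blocks). Suppose Δ is a family of complex numbers Δ^N_{PM}, symmetric in the lower pair (Δ^N_{PM} = Δ^N_{MP}), satisfying Δ^Q_{PM} I_Q{}^N − Δ^N_{PQ} I_M{}^Q = 0 and Δ^Q_{PM} (J ± iK)_Q{}^N − Δ^N_{PQ} (J ± iK)_M{}^Q = 0 for both choices of sign and for all indices P, M, N (repeated indices summed over all 2n values). Then Δ^N_{PM}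 = 0 for all P, M, N. -/
open Matrix

noncomputable section

/-- The canonical complex structure `I = diag(-i·1_n, +i·1_n)` for the splitting
`ℂ^{2n} = ℂ^n ⊕ ℂ^n`; the first summand carries the holomorphic indices, the second the
antiholomorphic ones. -/
noncomputable def IcanM (n : ℕ) : Matrix (Fin n ⊕ Fin n) (Fin n ⊕ Fin n) ℂ :=
  Matrix.fromBlocks ((-Complex.I) • 1) 0 0 (Complex.I • 1)

/-- The diagonal entries of `IcanM`. -/
def epsAux (n : ℕ) : (Fin n ⊕ Fin n) → ℂ := Sum.elim (fun _ => -Complex.I) (fun _ => Complex.I)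

lemma IcanM_apply (n : ℕ) (Q N : Fin n ⊕ Fin n) :
    IcanM n Q N = if Q = N then epsAux n N else 0 := by
  rcases Q with q | q <;> rcases N with m | m <;>
    simp [IcanM, epsAux, Matrix.one_apply] <;> aesop

lemma sumR (n : ℕ) (f : (Fin n ⊕ Fin n) → ℂ) (N : Fin n ⊕ Fin n) :
    ∑ Q, f Q * IcanM n Q N = f N * epsAux n N := by
  rw [Finset.sum_eq_single N]
  · rw [IcanM_apply]; simp
  · intro b _ hb; rw [IcanM_apply]; simp [hb]
  · simp

lemma sumL (n : ℕ) (f : (Fin n ⊕ Fin n) → ℂ) (Q : Fin n ⊕ Fin n) :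
    ∑ N, IcanM n Q N * f N = epsAux n Q * f Q := by
  rw [Finset.sum_eq_single Q]
  · rw [IcanM_apply]; simp
  · intro b _ hb; rw [IcanM_apply]; simp [Ne.symm hb]
  · simp

lemma sumL' (n : ℕ) (f : (Fin n ⊕ Fin n) → ℂ) (Q : Fin n ⊕ Fin n) :
    ∑ N, f N * IcanM n Q N = f Q * epsAux n Q := by
  simp_rw [mul_comm (f _)]
  rw [sumL, mul_comm]

lemma hII (n : ℕ) : IcanM n * IcanM n = -1 := by
  ext Q N
  rw [Matrix.mul_apply, sumL, IcanM_apply]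
  rcases Q with q | q <;> rcases N with m | m <;>
    simp [epsAux, Matrix.one_apply] <;> aesop

lemma sq_eq_neg_one (n : ℕ) (A B : Matrix (Fin n ⊕ Fin n) (Fin n ⊕ Fin n) ℂ)
    (h1 : IcanM n * A = B) (h2 : B * A = -IcanM n) : A * A = -1 := by
  have ha : IcanM n * (A * A) = -(IcanM n) := by
    rw [← Matrix.mul_assoc, h1, h2]
  have hb : IcanM n * (IcanM n * (A * A)) = IcanM n * (-(IcanM n)) := by rw [ha]
  rw [← Matrix.mul_assoc, hII, Matrix.mul_neg] at hb
  have h3 : -(A * A) = -(-1 : Matrix (Fin n ⊕ Fin n) (Fin n ⊕ Fin n) ℂ) := by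
    rw [neg_neg]
    calc -(A*A) = (-1 : Matrix _ _ ℂ) * (A * A) := by rw [neg_one_mul]
    _ = -(IcanM n * IcanM n) := hb ▸ rfl
    _ = 1 := by rw [hII, neg_neg]
  exact neg_injective h3

/-- Lemma 4, uniqueness of the Obata connection: if `I, J, K` satisfy the
quaternion relations with `I = diag(-i·1, i·1)`, and `Δ^N_{PM}` is symmetric in the lower
pair and commutes (in the displayed sense) with `I` and with `J ± iK`, then `Δ = 0`. -/
theorem stmt5 (n : ℕ) (hn : 1 ≤ n) (J K : Matrix (Fin n ⊕ Fin n) (Fin n ⊕ Fin n) ℂ)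
    (hIJ : IcanM n * J = K) (hJI : J * IcanM n = -K)
    (hJK : J * K = IcanM n) (hKJ : K * J = -IcanM n)
    (hKI : K * IcanM n = J) (hIK : IcanM n * K = -J)
    (Δ : (Fin n ⊕ Fin n) → (Fin n ⊕ Fin n) → (Fin n ⊕ Fin n) → ℂ)
    (hsym : ∀ N P M, Δ N P M = Δ N M P)
    (hI : ∀ P M N,
      (∑ Q, Δ Q P M * IcanM n Q N) - (∑ Q, Δ N P Q * IcanM n M Q) = 0)
    (hplus : ∀ P M N,
      (∑ Q, Δ Q P M * (J + Complex.I • K) Q N)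
        - (∑ Q, Δ N P Q * (J + Complex.I • K) M Q) = 0)
    (hminus : ∀ P M N,
      (∑ Q, Δ Q P M * (J - Complex.I • K) Q N)
        - (∑ Q, Δ N P Q * (J - Complex.I • K) M Q) = 0) :
    ∀ N P M, Δ N P M = 0 := by
  set Jp := J + Complex.I • K with hJp_def
  set Jm := J - Complex.I • K with hJm_def
  -- entrywise consequences of the quaternion relations
  have hIKe : ∀ Q N, epsAux n Q * K Q N = -(J Q N) := by
    intro Q N
    have h := congrFun (congrFun hIK Q) N
    rw [Matrix.mul_apply, sumL n (fun R => K R N)] at h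
    simpa using h
  have hJIe : ∀ Q N, J Q N * epsAux n N = -(K Q N) := by
    intro Q N
    have h := congrFun (congrFun hJI Q) N
    rw [Matrix.mul_apply, sumR n (fun R => J Q R)] at h
    simpa using h
  -- support of Jp and Jm
  have hJp_row : ∀ (a : Fin n) N, Jp (Sum.inr a) N = 0 := by
    intro a N
    have h := hIKe (Sum.inr a) N
    simp only [epsAux, Sum.elim_inr] at h
    simp only [hJp_def, Matrix.add_apply, Matrix.smul_apply, smul_eq_mul]
    linear_combination h
  have hJp_col : ∀ Q (b : Fin n), Jp Q (Sum.inl b) = 0 := by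
    intro Q b
    have h := hJIe Q (Sum.inl b)
    simp only [epsAux, Sum.elim_inl] at h
    simp only [hJp_def, Matrix.add_apply, Matrix.smul_apply, smul_eq_mul]
    linear_combination Complex.I * h + J Q (Sum.inl b) * Complex.I_mul_I
  have hJm_row : ∀ (a : Fin n) N, Jm (Sum.inl a) N = 0 := by
    intro a N
    have h := hIKe (Sum.inl a) N
    simp only [epsAux, Sum.elim_inl] at h
    simp only [hJm_def, Matrix.sub_apply, Matrix.smul_apply, smul_eq_mul]
    linear_combination h
  have hJm_col : ∀ Q (b : Fin n), Jm Q (Sum.inr b) = 0 := by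
    intro Q b
    have h := hJIe Q (Sum.inr b)
    simp only [epsAux, Sum.elim_inr] at h
    simp only [hJm_def, Matrix.sub_apply, Matrix.smul_apply, smul_eq_mul]
    linear_combination -Complex.I * h + J Q (Sum.inr b) * Complex.I_mul_I
  -- squares
  have hJJ : J * J = -1 := sq_eq_neg_one n J K hIJ hKJ
  have hKK : K * K = -1 := by
    refine sq_eq_neg_one n K (-J) ?_ ?_
    · rw [hIK]
    · rw [Matrix.neg_mul, hJK]
  -- products of Jp and Jm
  have hJpJm : Jp * Jm = (-2 : ℂ) • 1 - (2*Complex.I) • IcanM n := by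
    simp only [hJp_def, hJm_def, Matrix.mul_sub, Matrix.add_mul, Matrix.mul_smul,
      Matrix.smul_mul, smul_smul, hJJ, hKK, hJK, hKJ]
    match_scalars <;> simp [Complex.I_sq] <;> ring
  have hJmJp : Jm * Jp = (-2 : ℂ) • 1 + (2*Complex.I) • IcanM n := by
    simp only [hJp_def, hJm_def, Matrix.mul_add, Matrix.sub_mul, Matrix.mul_smul,
      Matrix.smul_mul, smul_smul, hJJ, hKK, hJK, hKJ]
    match_scalars <;> simp [Complex.I_sq] <;> ring
  -- inner product sums
  have Sval : ∀ a c : Fin n,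
      ∑ b, Jp (Sum.inl a) (Sum.inr b) * Jm (Sum.inr b) (Sum.inl c)
        = if a = c then (-4 : ℂ) else 0 := by
    intro a c
    have h := congrFun (congrFun hJpJm (Sum.inl a)) (Sum.inl c)
    rw [Matrix.mul_apply, Fintype.sum_sum_type] at h
    have h1 : ∀ a' : Fin n, Jp (Sum.inl a) (Sum.inl a') * Jm (Sum.inl a') (Sum.inl c) = 0 := by
      intro a'; rw [hJp_col]; ring
    rw [Finset.sum_congr rfl (fun a' _ => h1 a'), Finset.sum_const, smul_zero, zero_add] at h
    rw [h]
    rcases eq_or_ne a c with rfl | hac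
    · simp [IcanM_apply, epsAux]
      linear_combination 2*Complex.I_sq
    · simp [IcanM_apply, epsAux, hac, Sum.inl.injEq, Matrix.one_apply]
  have Sval' : ∀ a c : Fin n,
      ∑ b, Jm (Sum.inr a) (Sum.inl b) * Jp (Sum.inl b) (Sum.inr c)
        = if a = c then (-4 : ℂ) else 0 := by
    intro a c
    have h := congrFun (congrFun hJmJp (Sum.inr a)) (Sum.inr c)
    rw [Matrix.mul_apply, Fintype.sum_sum_type] at h
    have h1 : ∀ a' : Fin n, Jm (Sum.inr a) (Sum.inr a') * Jp (Sum.inr a') (Sum.inr c) = 0 := by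
      intro a'; rw [hJm_col]; ring
    rw [Finset.sum_congr rfl (fun a' _ => h1 a'), Finset.sum_const, smul_zero, add_zero] at h
    rw [h]
    rcases eq_or_ne a c with rfl | hac
    · simp [IcanM_apply, epsAux]
      linear_combination 2*Complex.I_sq
    · simp [IcanM_apply, epsAux, hac, Sum.inr.injEq, Matrix.one_apply]
  -- the I-relation entrywise: mixed components vanish
  have hIe : ∀ P M N, Δ N P M * epsAux n N - Δ N P M * epsAux n M = 0 := by
    intro P M N
    have h := hI P M N
    rw [sumR n (fun Q => Δ Q P M), sumL' n (fun Q => Δ N P Q)] at h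
    exact h
  have hd1 : ∀ P (a b : Fin n), Δ (Sum.inl a) P (Sum.inr b) = 0 := by
    intro P a b
    have h := hIe P (Sum.inr b) (Sum.inl a)
    simp only [epsAux, Sum.elim_inl, Sum.elim_inr] at h
    have h2 : Δ (Sum.inl a) P (Sum.inr b) * (2*Complex.I) = 0 := by linear_combination -h
    have h3 : (2*Complex.I : ℂ) ≠ 0 := by simp [Complex.I_ne_zero]
    exact (mul_eq_zero.mp h2).resolve_right h3
  have hd2 : ∀ P (a b : Fin n), Δ (Sum.inr a) P (Sum.inl b) = 0 := by
    intro P a b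
    have h := hIe P (Sum.inl b) (Sum.inr a)
    simp only [epsAux, Sum.elim_inl, Sum.elim_inr] at h
    have h2 : Δ (Sum.inr a) P (Sum.inl b) * (2*Complex.I) = 0 := by linear_combination h
    have h3 : (2*Complex.I : ℂ) ≠ 0 := by simp [Complex.I_ne_zero]
    exact (mul_eq_zero.mp h2).resolve_right h3
  -- the all-holomorphic case
  have keyL : ∀ (c p m : Fin n), Δ (Sum.inl c) (Sum.inl p) (Sum.inl m) = 0 := by
    intro c p m
    have k1 : ∀ b : Fin n,
        ∑ a, Δ (Sum.inl a) (Sum.inl p) (Sum.inl m) * Jp (Sum.inl a) (Sum.inr b) = 0 := by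
      intro b
      have h := hplus (Sum.inl p) (Sum.inl m) (Sum.inr b)
      rw [Fintype.sum_sum_type, Fintype.sum_sum_type] at h
      have e1 : ∀ b' : Fin n,
          Δ (Sum.inr b') (Sum.inl p) (Sum.inl m) * Jp (Sum.inr b') (Sum.inr b) = 0 := by
        intro b'; rw [hJp_row]; ring
      have e2 : ∀ a' : Fin n,
          Δ (Sum.inr b) (Sum.inl p) (Sum.inl a') * Jp (Sum.inl m) (Sum.inl a') = 0 := by
        intro a'; rw [hJp_col]; ring
      have e3 : ∀ b' : Fin n,
          Δ (Sum.inr b) (Sum.inl p) (Sum.inr b') * Jp (Sum.inl m) (Sum.inr b') = 0 := by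
        intro b'
        rw [hsym, hd2]; ring
      rw [Finset.sum_congr rfl (fun x _ => e1 x),
          Finset.sum_congr rfl (fun x _ => e2 x),
          Finset.sum_congr rfl (fun x _ => e3 x)] at h
      simpa using h
    have k2 : ∑ a, Δ (Sum.inl a) (Sum.inl p) (Sum.inl m)
        * (∑ b, Jp (Sum.inl a) (Sum.inr b) * Jm (Sum.inr b) (Sum.inl c)) = 0 := by
      calc ∑ a, Δ (Sum.inl a) (Sum.inl p) (Sum.inl m)
            * (∑ b, Jp (Sum.inl a) (Sum.inr b) * Jm (Sum.inr b) (Sum.inl c))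
          = ∑ a, ∑ b, (Δ (Sum.inl a) (Sum.inl p) (Sum.inl m)
            * Jp (Sum.inl a) (Sum.inr b)) * Jm (Sum.inr b) (Sum.inl c) := by
            refine Finset.sum_congr rfl fun a _ => ?_
            rw [Finset.mul_sum]
            exact Finset.sum_congr rfl fun b _ => by ring
        _ = ∑ b, (∑ a, Δ (Sum.inl a) (Sum.inl p) (Sum.inl m)
            * Jp (Sum.inl a) (Sum.inr b)) * Jm (Sum.inr b) (Sum.inl c) := by
            rw [Finset.sum_comm]
            exact Finset.sum_congr rfl fun b _ => by rw [Finset.sum_mul]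
        _ = 0 := by
            refine Finset.sum_eq_zero fun b _ => ?_
            rw [k1 b, zero_mul]
    rw [Finset.sum_congr rfl (fun a _ => by rw [Sval a c])] at k2
    simp only [mul_ite, mul_zero, Finset.sum_ite_eq', Finset.mem_univ, if_true] at k2
    have h4 : (-4 : ℂ) ≠ 0 := by norm_num
    exact (mul_eq_zero.mp k2).resolve_right h4
  -- the all-antiholomorphic case
  have keyR : ∀ (c p m : Fin n), Δ (Sum.inr c) (Sum.inr p) (Sum.inr m) = 0 := by
    intro c p m
    have k1 : ∀ b : Fin n,
        ∑ a, Δ (Sum.inr a) (Sum.inr p) (Sum.inr m) * Jm (Sum.inr a) (Sum.inl b) = 0 := by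
      intro b
      have h := hminus (Sum.inr p) (Sum.inr m) (Sum.inl b)
      rw [Fintype.sum_sum_type, Fintype.sum_sum_type] at h
      have e1 : ∀ b' : Fin n,
          Δ (Sum.inl b') (Sum.inr p) (Sum.inr m) * Jm (Sum.inl b') (Sum.inl b) = 0 := by
        intro b'; rw [hJm_row]; ring
      have e2 : ∀ a' : Fin n,
          Δ (Sum.inl b) (Sum.inr p) (Sum.inl a') * Jm (Sum.inr m) (Sum.inl a') = 0 := by
        intro a'
        rw [hsym, hd1]; ring
      have e3 : ∀ b' : Fin n,
          Δ (Sum.inl b) (Sum.inr p) (Sum.inr b') * Jm (Sum.inr m) (Sum.inr b') = 0 := by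
        intro b'; rw [hJm_col]; ring
      rw [Finset.sum_congr rfl (fun x _ => e1 x),
          Finset.sum_congr rfl (fun x _ => e2 x),
          Finset.sum_congr rfl (fun x _ => e3 x)] at h
      simpa using h
    have k2 : ∑ a, Δ (Sum.inr a) (Sum.inr p) (Sum.inr m)
        * (∑ b, Jm (Sum.inr a) (Sum.inl b) * Jp (Sum.inl b) (Sum.inr c)) = 0 := by
      calc ∑ a, Δ (Sum.inr a) (Sum.inr p) (Sum.inr m)
            * (∑ b, Jm (Sum.inr a) (Sum.inl b) * Jp (Sum.inl b) (Sum.inr c))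
          = ∑ a, ∑ b, (Δ (Sum.inr a) (Sum.inr p) (Sum.inr m)
            * Jm (Sum.inr a) (Sum.inl b)) * Jp (Sum.inl b) (Sum.inr c) := by
            refine Finset.sum_congr rfl fun a _ => ?_
            rw [Finset.mul_sum]
            exact Finset.sum_congr rfl fun b _ => by ring
        _ = ∑ b, (∑ a, Δ (Sum.inr a) (Sum.inr p) (Sum.inr m)
            * Jm (Sum.inr a) (Sum.inl b)) * Jp (Sum.inl b) (Sum.inr c) := by
            rw [Finset.sum_comm]
            exact Finset.sum_congr rfl fun b _ => by rw [Finset.sum_mul]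
        _ = 0 := by
            refine Finset.sum_eq_zero fun b _ => ?_
            rw [k1 b, zero_mul]
    rw [Finset.sum_congr rfl (fun a _ => by rw [Sval' a c])] at k2
    simp only [mul_ite, mul_zero, Finset.sum_ite_eq', Finset.mem_univ, if_true] at k2
    have h4 : (-4 : ℂ) ≠ 0 := by norm_num
    exact (mul_eq_zero.mp k2).resolve_right h4
  -- case analysis
  intro N P M
  rcases N with a | a <;> rcases M with b | b
  · rcases P with p | p
    · exact keyL a p b
    · rw [hsym]; exact hd1 _ a p
  · exact hd1 _ a b
  · exact hd2 _ a b
  · rcases P with p | p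
    · rw [hsym]; exact hd2 _ a p
    · exact keyR a p b
end
end

section
/- Let d, k ≥ 1, let 𝔥 ⊆ M_k(ℝ) be an ℝ-linear subspace, and let A_M : ℝ^d → M_k(ℝ) (M = 1,…,d) be smooth matrix-valued functions satisfying the radial gauge condition Σ_M x^M A_M(x) = 0 for all x ∈ ℝ^d. Define F_{MN}(x) = ∂_M A_N(x) − ∂_N A_M(x) + [A_M(x), A_N(x)]. If F_{MN}(x) ∈ 𝔥 for all x ∈ ℝ^d and all M, N, then A_M(x) ∈ 𝔥 for all x ∈ ℝ^d and all M. -/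
noncomputable section

/-- The non-abelian field strength
`F_{MN}(x) = ∂_M A_N(x) - ∂_N A_M(x) + [A_M(x), A_N(x)]` of a matrix-valued gauge
potential `A`, with partial derivatives taken entrywise. -/
noncomputable def fieldStrength {d k : ℕ}
    (A : Fin d → (Fin d → ℝ) → Matrix (Fin k) (Fin k) ℝ) (M N : Fin d)
    (x : Fin d → ℝ) : Matrix (Fin k) (Fin k) ℝ :=
  Matrix.of (fun i j =>
    fderiv ℝ (fun y => A N y i j) x (Pi.single M 1) -
      fderiv ℝ (fun y => A M y i j) x (Pi.single N 1)) +
  (A M x * A N x - A N x * A M x)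

/-- if a smooth gauge potential `A` in the radial (Fock–Schwinger) gauge has
its field strength valued in an `ℝ`-linear subspace `𝔥` of the matrix algebra, then the
potential itself takes values in `𝔥`. -/
theorem stmt9 (d k : ℕ) (hd : 1 ≤ d) (hk : 1 ≤ k)
    (H : Submodule ℝ (Matrix (Fin k) (Fin k) ℝ))
    (A : Fin d → (Fin d → ℝ) → Matrix (Fin k) (Fin k) ℝ)
    (hA : ∀ M i j, ContDiff ℝ (⊤ : ℕ∞) (fun x => A M x i j))
    (hgauge : ∀ x : Fin d → ℝ, (∑ M, x M • A M x) = 0)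
    (hF : ∀ (x : Fin d → ℝ) (M N : Fin d), fieldStrength A M N x ∈ H) :
    ∀ (x : Fin d → ℝ) (M : Fin d), A M x ∈ H := by
  have hdiff : ∀ N i j, Differentiable ℝ (fun y => A N y i j) :=
    fun N i j => (hA N i j).differentiable (by simp)
  -- entrywise gauge condition
  have hg0 : ∀ (y : Fin d → ℝ) (i j : Fin k), ∑ N, y N * A N y i j = 0 := by
    intro y i j
    have h := congrFun (congrFun (hgauge y) i) j
    simpa [Matrix.sum_apply, Matrix.smul_apply, smul_eq_mul] using h
  -- derivative of the gauge condition
  have hgder : ∀ (y : Fin d → ℝ) (i j : Fin k) (M' : Fin d),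
      A M' y i j + ∑ N, y N * (fderiv ℝ (fun z => A N z i j) y) (Pi.single M' 1) = 0 := by
    intro y i j M'
    set L : (Fin d → ℝ) →L[ℝ] ℝ :=
      ∑ N, (y N • fderiv ℝ (fun z => A N z i j) y
        + A N y i j • (ContinuousLinearMap.proj N : (Fin d → ℝ) →L[ℝ] ℝ)) with hL
    have hsum : HasFDerivAt (fun z : Fin d → ℝ => ∑ N, z N * A N z i j) L y := by
      refine HasFDerivAt.fun_sum (fun N _ => ?_)
      exact ((ContinuousLinearMap.proj N : (Fin d → ℝ) →L[ℝ] ℝ).hasFDerivAt).mul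
        ((hdiff N i j y).hasFDerivAt)
    have hzero : HasFDerivAt (fun z : Fin d → ℝ => ∑ N, z N * A N z i j)
        (0 : (Fin d → ℝ) →L[ℝ] ℝ) y := by
      have : (fun z : Fin d → ℝ => ∑ N, z N * A N z i j) = fun _ => (0:ℝ) := by
        funext z; exact hg0 z i j
      rw [this]; exact hasFDerivAt_const 0 y
    have hLz : L = 0 := hsum.unique hzero
    have := congrArg (fun T : (Fin d → ℝ) →L[ℝ] ℝ => T (Pi.single M' 1)) hLz
    simp only [hL, ContinuousLinearMap.sum_apply, ContinuousLinearMap.add_apply,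
      ContinuousLinearMap.smul_apply, ContinuousLinearMap.proj_apply,
      ContinuousLinearMap.zero_apply, smul_eq_mul] at this
    rw [Finset.sum_add_distrib] at this
    have h1 : ∑ N, A N y i j * (Pi.single M' 1 : Fin d → ℝ) N = A M' y i j := by
      simp [Pi.single_apply, Finset.sum_ite_eq']
    rw [h1] at this
    linarith [this]
  -- directional derivative decomposition
  have hdir : ∀ (y : Fin d → ℝ) (i j : Fin k) (N : Fin d) (v : Fin d → ℝ),
      fderiv ℝ (fun z => A N z i j) y v
        = ∑ N', v N' * fderiv ℝ (fun z => A N z i j) y (Pi.single N' 1) := by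
    intro y i j N v
    have hv : v = ∑ N', v N' • (Pi.single N' 1 : Fin d → ℝ) := by
      funext m
      simp [Pi.single_apply, Finset.sum_apply, mul_ite, Finset.sum_ite_eq']
    conv_lhs => rw [hv]
    rw [map_sum]
    simp [smul_eq_mul]
  intro x M
  rw [← Subspace.dualAnnihilator_dualCoannihilator_eq (W := H),
    Submodule.mem_dualCoannihilator]
  intro φ hφ
  rw [Submodule.mem_dualAnnihilator] at hφ
  set c : Fin k → Fin k → ℝ := fun i j => φ (Matrix.single i j 1) with hc
  have hφeq : ∀ B : Matrix (Fin k) (Fin k) ℝ, φ B = ∑ i, ∑ j, B i j * c i j := by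
    intro B
    conv_lhs => rw [Matrix.matrix_eq_sum_single B]
    rw [map_sum]
    refine Finset.sum_congr rfl fun i _ => ?_
    rw [map_sum]
    refine Finset.sum_congr rfl fun j _ => ?_
    have : Matrix.single i j (B i j) = B i j • Matrix.single i j (1:ℝ) := by
      rw [Matrix.smul_single, smul_eq_mul, mul_one]
    rw [this, map_smul, smul_eq_mul]
  -- the key pointwise identity
  have key : ∀ (t : ℝ) (i j : Fin k),
      A M (t • x) i j + t * fderiv ℝ (fun z => A M z i j) (t • x) x
        = ∑ N, (t • x) N * fieldStrength A N M (t • x) i j := by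
    intro t i j
    set y := t • x with hy
    have hcomm : ∑ N, y N • (A M y * A N y - A N y * A M y) = 0 := by
      have : ∑ N, y N • (A M y * A N y - A N y * A M y)
          = A M y * (∑ N, y N • A N y) - (∑ N, y N • A N y) * A M y := by
        rw [Matrix.mul_sum, Matrix.sum_mul, ← Finset.sum_sub_distrib]
        refine Finset.sum_congr rfl fun N _ => ?_
        rw [smul_sub, Matrix.mul_smul, Matrix.smul_mul]
      rw [this, hgauge y, Matrix.mul_zero, Matrix.zero_mul, sub_zero]
    have hcomm' : ∑ N, y N * (A M y * A N y - A N y * A M y) i j = 0 := by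
      have := congrFun (congrFun hcomm i) j
      simpa [Matrix.sum_apply, Matrix.smul_apply, smul_eq_mul] using this
    have hAM : A M y i j = -∑ N, y N * fderiv ℝ (fun z => A N z i j) y (Pi.single M 1) := by
      have := hgder y i j M
      linarith [this]
    have hD : t * fderiv ℝ (fun z => A M z i j) y x
        = ∑ N, y N * fderiv ℝ (fun z => A M z i j) y (Pi.single N 1) := by
      rw [hdir y i j M x, Finset.mul_sum]
      refine Finset.sum_congr rfl fun N _ => ?_
      rw [hy]; simp [Pi.smul_apply, smul_eq_mul]; ring
    have hFentry : ∀ N, fieldStrength A N M y i j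
        = fderiv ℝ (fun z => A M z i j) y (Pi.single N 1)
          - fderiv ℝ (fun z => A N z i j) y (Pi.single M 1)
          + (A N y * A M y - A M y * A N y) i j := by
      intro N
      simp [fieldStrength, Matrix.add_apply, Matrix.of_apply, Matrix.sub_apply]
    have hR : ∑ N, y N * fieldStrength A N M y i j
        = (∑ N, y N * fderiv ℝ (fun z => A M z i j) y (Pi.single N 1)
            - ∑ N, y N * fderiv ℝ (fun z => A N z i j) y (Pi.single M 1))
          + ∑ N, y N * (A N y * A M y - A M y * A N y) i j := by
      rw [← Finset.sum_sub_distrib, ← Finset.sum_add_distrib]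
      refine Finset.sum_congr rfl fun N _ => ?_
      rw [hFentry N]; ring
    have hflip : ∑ N, y N * (A N y * A M y - A M y * A N y) i j = 0 := by
      have he : ∀ N, y N * (A N y * A M y - A M y * A N y) i j
          = -(y N * (A M y * A N y - A N y * A M y) i j) := by
        intro N; rw [Matrix.sub_apply, Matrix.sub_apply]; ring
      rw [Finset.sum_congr rfl fun N _ => he N, Finset.sum_neg_distrib, hcomm', neg_zero]
    rw [hAM, hD, hR, hflip]
    ring
  -- the scalar function
  set f : ℝ → ℝ := fun t => ∑ i, ∑ j, (t * A M (t • x) i j) * c i j with hf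
  have hderiv : ∀ t : ℝ, HasDerivAt f 0 t := by
    intro t
    have hline : HasDerivAt (fun s : ℝ => s • x) x t := by
      simpa using (hasDerivAt_id t).smul_const x
    have hterm : ∀ i j, HasDerivAt (fun s : ℝ => (s * A M (s • x) i j) * c i j)
        ((A M (t • x) i j + t * fderiv ℝ (fun z => A M z i j) (t • x) x) * c i j) t := by
      intro i j
      have ha : HasDerivAt (fun s : ℝ => A M (s • x) i j)
          (fderiv ℝ (fun z => A M z i j) (t • x) x) t :=
        ((hdiff M i j (t • x)).hasFDerivAt).comp_hasDerivAt (f := fun s : ℝ => s • x) t hline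
      have := ((hasDerivAt_id t).mul ha).mul_const (c i j)
      simpa [one_mul, id] using this
    have hsum : HasDerivAt f
        (∑ i, ∑ j, (A M (t • x) i j + t * fderiv ℝ (fun z => A M z i j) (t • x) x) * c i j)
        t := by
      refine HasDerivAt.fun_sum (fun i _ => ?_)
      exact HasDerivAt.fun_sum (fun j _ => hterm i j)
    have hval : (∑ i, ∑ j,
        (A M (t • x) i j + t * fderiv ℝ (fun z => A M z i j) (t • x) x) * c i j) = 0 := by
      have e1 : (∑ i, ∑ j,
          (A M (t • x) i j + t * fderiv ℝ (fun z => A M z i j) (t • x) x) * c i j)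
          = ∑ i, ∑ j, (∑ N, (t • x) N * fieldStrength A N M (t • x) i j) * c i j :=
        Finset.sum_congr rfl fun i _ => Finset.sum_congr rfl fun j _ => by rw [key t i j]
      have e2 : (∑ i, ∑ j, (∑ N, (t • x) N * fieldStrength A N M (t • x) i j) * c i j)
          = φ (∑ N, (t • x) N • fieldStrength A N M (t • x)) := by
        rw [hφeq]
        refine Finset.sum_congr rfl fun i _ => Finset.sum_congr rfl fun j _ => ?_
        congr 1
        simp [Matrix.sum_apply, Matrix.smul_apply, smul_eq_mul]
      rw [e1, e2, map_sum]
      refine Finset.sum_eq_zero fun N _ => ?_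
      rw [map_smul, hφ _ (hF (t • x) N M), smul_zero]
    rw [← hval]; exact hsum
  have hconst : f 1 = f 0 :=
    is_const_of_deriv_eq_zero (fun t => (hderiv t).differentiableAt)
      (fun t => (hderiv t).deriv) 1 0
  have hf0 : f 0 = 0 := by simp [hf]
  have hf1 : f 1 = φ (A M x) := by
    rw [hφeq]; simp [hf]
  rw [← hf1, hconst, hf0]
end
end
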